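/- arXiv:2507.20032 — 2 statements merged into one kernel-verified Lean document; each statement's English description precedes it below -/
import Mathlib

section
/- Let ε₋, ε₊, v₋, v₊ be positive reals, ω₁ > 0, and ω₂, ω₃ nonzero reals. Let k_i, k_r, k_t ∈ ℝ³ be unit vectors and A_i, A_r, A_t ∈ ℂ³ nonzero vectors, and fix t₀ ∈ ℝ. If ε₊ A_t e^{i ω₃ (k_t·x / v₊ − t₀)} + ε₊ A_r e^{i ω₂ (k_r·x / v₊ − t₀)} − ε₋ A_i e^{i ω₁ (k_i·x / v₋ − t₀)} = 0 for all x ∈ ℝ³, then ω₁ k_i / v₋ = ω₂ k_r / v₊ = ω₃ k_t / v₊; equivalently, k_t = (ω₁/ω₃)(v₊/v₋) k_i and k_r = (ω₁/ω₂)(v₊/v₋) k_i (Snell's law at a temporal interface). -/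
open scoped RealInnerProductSpace

noncomputable def Eexp (a x : EuclideanSpace ℝ (Fin 3)) : ℂ :=
  Complex.exp (Complex.I * (⟪a, x⟫ : ℝ))

lemma Eexp_zero (a : EuclideanSpace ℝ (Fin 3)) : Eexp a 0 = 1 := by
  simp [Eexp]

lemma Eexp_ne_zero (a x : EuclideanSpace ℝ (Fin 3)) : Eexp a x ≠ 0 :=
  Complex.exp_ne_zero _

lemma Eexp_add (a x y : EuclideanSpace ℝ (Fin 3)) :
    Eexp a (x + y) = Eexp a x * Eexp a y := by
  rw [Eexp, Eexp, Eexp, ← Complex.exp_add, inner_add_right]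
  push_cast
  ring_nf

lemma exists_pi (a b : EuclideanSpace ℝ (Fin 3)) (hab : a ≠ b) :
    ∃ x, Eexp a x = - Eexp b x := by
  set d := a - b with hd
  have hdne : d ≠ 0 := sub_ne_zero.mpr hab
  refine ⟨(Real.pi / ‖d‖ ^ 2) • d, ?_⟩
  have hinner : (⟪a, (Real.pi / ‖d‖ ^ 2) • d⟫ : ℝ)
      = ⟪b, (Real.pi / ‖d‖ ^ 2) • d⟫ + Real.pi := by
    have h1 : (⟪d, (Real.pi / ‖d‖ ^ 2) • d⟫ : ℝ) = Real.pi := by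
      rw [real_inner_smul_right, real_inner_self_eq_norm_sq]
      have hn : ‖d‖ ≠ 0 := norm_ne_zero_iff.mpr hdne
      field_simp
    have h2 : (⟪a, (Real.pi / ‖d‖ ^ 2) • d⟫ : ℝ)
        - ⟪b, (Real.pi / ‖d‖ ^ 2) • d⟫ = ⟪d, (Real.pi / ‖d‖ ^ 2) • d⟫ := by
      rw [hd, inner_sub_left]
    linarith [h2, h1]
  rw [Eexp, Eexp, hinner]
  have hc : (((⟪b, (Real.pi / ‖d‖ ^ 2) • d⟫ : ℝ) + Real.pi : ℝ) : ℂ)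
      = ((⟪b, (Real.pi / ‖d‖ ^ 2) • d⟫ : ℝ) : ℂ) + (Real.pi : ℂ) := by push_cast; ring
  rw [hc, mul_add, Complex.exp_add, mul_comm Complex.I (Real.pi : ℂ),
    Complex.exp_pi_mul_I]
  ring

lemma lin_indep_two (a b : EuclideanSpace ℝ (Fin 3)) (hab : a ≠ b) (u v : ℂ)
    (h : ∀ x, u * Eexp a x + v * Eexp b x = 0) : u = 0 ∧ v = 0 := by
  have h0 := h 0
  rw [Eexp_zero, Eexp_zero] at h0
  simp at h0
  obtain ⟨x, hx⟩ := exists_pi a b hab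
  have hx2 := h x
  rw [hx] at hx2
  have hv : v = -u := by linear_combination h0
  rw [hv] at hx2
  have : (-2 * u) * Eexp b x = 0 := by ring_nf; ring_nf at hx2; linear_combination hx2
  have hu : u = 0 := by
    rcases mul_eq_zero.mp this with h' | h'
    · rcases mul_eq_zero.mp h' with h'' | h'' 
      · norm_num at h''
      · exact h''
    · exact absurd h' (Eexp_ne_zero b x)
  exact ⟨hu, by rw [hv, hu, neg_zero]⟩

lemma lin_indep_three (a b c : EuclideanSpace ℝ (Fin 3))
    (hab : a ≠ b) (hac : a ≠ c) (hbc : b ≠ c) (u v w : ℂ)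
    (h : ∀ x, u * Eexp a x + v * Eexp b x + w * Eexp c x = 0) :
    u = 0 ∧ v = 0 ∧ w = 0 := by
  have key : ∀ y, ∀ x, (u * (Eexp a y - Eexp c y)) * Eexp a x
      + (v * (Eexp b y - Eexp c y)) * Eexp b x = 0 := by
    intro y x
    have h1 := h (x + y)
    rw [Eexp_add, Eexp_add, Eexp_add] at h1
    have h2 := h x
    linear_combination h1 - Eexp c y * h2
  have hu : u = 0 := by
    by_contra hu
    have : ∀ y, u * (Eexp a y - Eexp c y) = 0 := fun y =>
      (lin_indep_two a b hab _ _ (key y)).1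
    have h2 : ∀ y, (1 : ℂ) * Eexp a y + (-1 : ℂ) * Eexp c y = 0 := by
      intro y
      have := this y
      have h3 : Eexp a y - Eexp c y = 0 := by
        rcases mul_eq_zero.mp this with h' | h'
        · exact absurd h' hu
        · exact h'
      linear_combination h3
    have := (lin_indep_two a c hac 1 (-1) h2).1
    norm_num at this
  have hv : v = 0 := by
    by_contra hv
    have : ∀ y, v * (Eexp b y - Eexp c y) = 0 := fun y =>
      (lin_indep_two a b hab _ _ (key y)).2
    have h2 : ∀ y, (1 : ℂ) * Eexp b y + (-1 : ℂ) * Eexp c y = 0 := by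
      intro y
      have := this y
      have h3 : Eexp b y - Eexp c y = 0 := by
        rcases mul_eq_zero.mp this with h' | h'
        · exact absurd h' hv
        · exact h'
      linear_combination h3
    have := (lin_indep_two b c hbc 1 (-1) h2).1
    norm_num at this
  refine ⟨hu, hv, ?_⟩
  have := h 0
  rw [hu, hv] at this
  simpa [Eexp_zero] using this

lemma expand_exp (ω v t₀ : ℝ) (hv : v ≠ 0) (k x : EuclideanSpace ℝ (Fin 3)) :
    Complex.exp (Complex.I * (ω : ℂ) * ((⟪k, x⟫ / v - t₀ : ℝ) : ℂ))
      = Eexp ((ω / v) • k) x * Complex.exp (-(Complex.I * ω * t₀)) := by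
  rw [Eexp, ← Complex.exp_add]
  congr 1
  have : (⟪(ω / v) • k, x⟫ : ℝ) = (ω / v) * ⟪k, x⟫ := real_inner_smul_left _ _ _
  rw [this]
  push_cast
  field_simp
  ring
/-- **Snell's law at a temporal interface.** If the electric boundary condition
`ε₊ A_t e^{iω₃(k_t·x/v₊ − t₀)} + ε₊ A_r e^{iω₂(k_r·x/v₊ − t₀)} − ε₋ A_i e^{iω₁(k_i·x/v₋ − t₀)} = 0`
holds for every `x ∈ ℝ³`, where `k_i, k_r, k_t` are unit vectors and `A_i, A_r, A_t` are
nonzero complex amplitudes, then `ω₁ k_i / v₋ = ω₂ k_r / v₊ = ω₃ k_t / v₊`; equivalently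
`k_t = (ω₁/ω₃)(v₊/v₋) k_i` and `k_r = (ω₁/ω₂)(v₊/v₋) k_i`. -/
theorem snell_law_temporal_interface
    (εm εp vm vp : ℝ) (hεm : 0 < εm) (hεp : 0 < εp) (hvm : 0 < vm) (hvp : 0 < vp)
    (ω₁ ω₂ ω₃ : ℝ) (hω₁ : 0 < ω₁) (hω₂ : ω₂ ≠ 0) (hω₃ : ω₃ ≠ 0)
    (ki kr kt : EuclideanSpace ℝ (Fin 3))
    (hki : ‖ki‖ = 1) (hkr : ‖kr‖ = 1) (hkt : ‖kt‖ = 1)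
    (Ai Ar At : Fin 3 → ℂ) (hAi : Ai ≠ 0) (hAr : Ar ≠ 0) (hAt : At ≠ 0)
    (t₀ : ℝ)
    (h : ∀ x : EuclideanSpace ℝ (Fin 3),
      (εp : ℂ) • Complex.exp (Complex.I * (ω₃ : ℂ) * ((⟪kt, x⟫ / vp - t₀ : ℝ) : ℂ)) • At
        + (εp : ℂ) • Complex.exp (Complex.I * (ω₂ : ℂ) * ((⟪kr, x⟫ / vp - t₀ : ℝ) : ℂ)) • Ar
        - (εm : ℂ) • Complex.exp (Complex.I * (ω₁ : ℂ) * ((⟪ki, x⟫ / vm - t₀ : ℝ) : ℂ)) • Ai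
        = 0) :
    (ω₁ / vm) • ki = (ω₂ / vp) • kr ∧ (ω₂ / vp) • kr = (ω₃ / vp) • kt ∧
      kt = ((ω₁ / ω₃) * (vp / vm)) • ki ∧ kr = ((ω₁ / ω₂) * (vp / vm)) • ki := by
  set a : EuclideanSpace ℝ (Fin 3) := (ω₃ / vp) • kt with ha
  set b : EuclideanSpace ℝ (Fin 3) := (ω₂ / vp) • kr with hb
  set c : EuclideanSpace ℝ (Fin 3) := (ω₁ / vm) • ki with hc
  set C₁ : ℂ := Complex.exp (-(Complex.I * ω₁ * t₀)) with hC₁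
  set C₂ : ℂ := Complex.exp (-(Complex.I * ω₂ * t₀)) with hC₂
  set C₃ : ℂ := Complex.exp (-(Complex.I * ω₃ * t₀)) with hC₃
  have hεpC : (εp : ℂ) ≠ 0 := Complex.ofReal_ne_zero.mpr hεp.ne'
  have hεmC : (εm : ℂ) ≠ 0 := Complex.ofReal_ne_zero.mpr hεm.ne'
  have hcomp : ∀ x, ∀ j : Fin 3,
      ((εp : ℂ) * C₃ * At j) * Eexp a x + ((εp : ℂ) * C₂ * Ar j) * Eexp b x
        + (-((εm : ℂ) * C₁ * Ai j)) * Eexp c x = 0 := by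
    intro x j
    have hx := congrFun (h x) j
    simp only [Pi.add_apply, Pi.sub_apply, Pi.smul_apply, smul_eq_mul, Pi.zero_apply] at hx
    rw [expand_exp ω₃ vp t₀ hvp.ne' kt x, expand_exp ω₂ vp t₀ hvp.ne' kr x,
      expand_exp ω₁ vm t₀ hvm.ne' ki x] at hx
    rw [← ha, ← hb, ← hc, ← hC₁, ← hC₂, ← hC₃] at hx
    linear_combination hx
  obtain ⟨ji, hji⟩ := Function.ne_iff.mp hAi
  obtain ⟨jr, hjr⟩ := Function.ne_iff.mp hAr
  obtain ⟨jt, hjt⟩ := Function.ne_iff.mp hAt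
  have hac : a = c := by
    by_contra hac
    by_cases hbc : b = c
    · have h2 : ∀ x, ((εp : ℂ) * C₃ * At jt) * Eexp a x
          + ((εp : ℂ) * C₂ * Ar jt + (-((εm : ℂ) * C₁ * Ai jt))) * Eexp c x = 0 := by
        intro x
        have hx := hcomp x jt
        rw [hbc] at hx
        linear_combination hx
      have := (lin_indep_two a c hac _ _ h2).1
      simp only [mul_eq_zero, Complex.exp_ne_zero, hεpC, hC₃, false_or] at this
      exact hjt this
    · by_cases hab : a = b
      · have h2 : ∀ x, ((εp : ℂ) * C₃ * At ji + (εp : ℂ) * C₂ * Ar ji) * Eexp a x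
            + (-((εm : ℂ) * C₁ * Ai ji)) * Eexp c x = 0 := by
          intro x
          have hx := hcomp x ji
          rw [← hab] at hx
          linear_combination hx
        have := (lin_indep_two a c hac _ _ h2).2
        simp only [neg_eq_zero, mul_eq_zero, Complex.exp_ne_zero, hεmC, hC₁, false_or]
          at this
        exact hji this
      · have := (lin_indep_three a b c hab hac hbc _ _ _ (fun x => hcomp x jt)).1
        simp only [mul_eq_zero, Complex.exp_ne_zero, hεpC, hC₃, false_or] at this
        exact hjt this
  have hbc : b = c := by
    by_contra hbc
    have h2 : ∀ x, ((εp : ℂ) * C₂ * Ar jr) * Eexp b x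
        + ((εp : ℂ) * C₃ * At jr + (-((εm : ℂ) * C₁ * Ai jr))) * Eexp c x = 0 := by
      intro x
      have hx := hcomp x jr
      rw [hac] at hx
      linear_combination hx
    have := (lin_indep_two b c hbc _ _ h2).1
    simp only [mul_eq_zero, Complex.exp_ne_zero, hεpC, hC₂, false_or] at this
    exact hjr this
  refine ⟨hbc.symm, hbc.trans hac.symm, ?_, ?_⟩
  · have h1 : (vp / ω₃ : ℝ) • a = (vp / ω₃ : ℝ) • c := by rw [hac]
    rw [ha, hc, smul_smul, smul_smul] at h1
    have e1 : vp / ω₃ * (ω₃ / vp) = 1 := by field_simp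
    have e2 : vp / ω₃ * (ω₁ / vm) = (ω₁ / ω₃) * (vp / vm) := by ring
    rwa [e1, e2, one_smul] at h1
  · have h1 : (vp / ω₂ : ℝ) • b = (vp / ω₂ : ℝ) • c := by rw [hbc]
    rw [hb, hc, smul_smul, smul_smul] at h1
    have e1 : vp / ω₂ * (ω₂ / vp) = 1 := by field_simp
    have e2 : vp / ω₂ * (ω₁ / vm) = (ω₁ / ω₂) * (vp / vm) := by ring
    rwa [e1, e2, one_smul] at h1
end

section
/- Let ε₋, ε₊ > 0, let ω₁, ω₂ be nonzero reals, let k_i ∈ ℝ³ be a unit vector, and let B_i, B_r, B_t ∈ ℂ³ satisfy B_r + B_t = (ε₋/ε₊) B_i and (ω₁/ω₂)(B_r + B_t) × k_i = B_i × k_i, where × is the cross product in ℂ³ with k_i regarded as a complex vector. If B_i × k_i ≠ 0, then ε₋ ω₁ = ε₊ ω₂. -/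
/-- **Degenerate case `ω₂ = ω₃` of the amplitude system.** If the phase-adjusted
amplitudes satisfy `B_r + B_t = (ε₋/ε₊) B_i` and
`(ω₁/ω₂)(B_r + B_t) × k_i = B_i × k_i` (cross product in `ℂ³` with the unit vector
`k_i` regarded as complex), and `B_i × k_i ≠ 0`, then the solvability condition
`ε₋ ω₁ = ε₊ ω₂` holds. -/
theorem amplitudes_degenerate_case
    (εm εp : ℝ) (hεm : 0 < εm) (hεp : 0 < εp)
    (ω₁ ω₂ : ℝ) (hω₁ : ω₁ ≠ 0) (hω₂ : ω₂ ≠ 0)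
    (ki : EuclideanSpace ℝ (Fin 3)) (hki : ‖ki‖ = 1)
    (Bi Br Bt : Fin 3 → ℂ)
    (h1 : Br + Bt = (εm / εp : ℝ) • Bi)
    (h2 : crossProduct ((ω₁ / ω₂ : ℝ) • (Br + Bt)) (fun j => ((ki j : ℝ) : ℂ))
        = crossProduct Bi (fun j => ((ki j : ℝ) : ℂ)))
    (hBi : crossProduct Bi (fun j => ((ki j : ℝ) : ℂ)) ≠ 0) :
    εm * ω₁ = εp * ω₂ := by
  have hsmul : ∀ (r : ℝ) (v : Fin 3 → ℂ), (r : ℝ) • v = ((r : ℂ)) • v := by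
    intro r v
    funext j
    simp [Complex.real_smul]
  rw [h1, hsmul, hsmul, smul_smul, map_smul, LinearMap.smul_apply] at h2
  have hc : ((ω₁ / ω₂ : ℝ) : ℂ) * ((εm / εp : ℝ) : ℂ) = 1 := by
    by_contra hne
    apply hBi
    have key : ((((ω₁ / ω₂ : ℝ) : ℂ) * ((εm / εp : ℝ) : ℂ)) - 1) •
        (crossProduct Bi (fun j => ((ki j : ℝ) : ℂ))) = 0 := by
      rw [sub_smul, one_smul, h2, sub_self]
    rcases smul_eq_zero.mp key with h | h
    · exact absurd (sub_eq_zero.mp h) hne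
    · exact h
  have hr : (ω₁ / ω₂) * (εm / εp) = 1 := by
    exact_mod_cast hc
  field_simp at hr
  linarith
end
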